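/- In a commutative idempotent involutive residuated lattice, if x ⊑ y in the monoidal order (x·y = x), then 0_x ⊑ 0_y (i.e., 0_x · 0_y = 0_x). -/

import Mathlib

/-- A commutative idempotent involutive residuated lattice. -/
class CIdInRL (α : Type*) extends Lattice α, CommMonoid α, Zero α where
  arrow : α → α → α
  residuation : ∀ x y z : α, x * y ≤ z ↔ y ≤ arrow x z
  idem : ∀ x : α, x * x = x
  involutive : ∀ x : α, arrow (arrow x 0) 0 = x

namespace CIdInRL
variable {α : Type*} [CIdInRL α]
/-- linear negation ¬x := x → 0 -/
def neg (x : α) : α := arrow x 0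
/-- 0_x := x ∧ ¬x -/
def zx (x : α) : α := x ⊓ neg x
/-- 1_x := x ∨ ¬x -/
def ox (x : α) : α := x ⊔ neg x
/-- monoidal order x ⊑ y iff x·y = x -/
def mleq (x y : α) : Prop := x * y = x
end CIdInRL

/-!
Write `a = 0_x`, `b = 0_y`. Since `a ≤ x` and `a ≤ ¬x`, idempotence gives `a = a·a ≤ x·¬x`.
Using `x = x·y`, residuation then shows `a ≤ y` and `a ≤ ¬y`, i.e. `a ≤ b`, whence `a = a·a ≤ a·b`;
conversely `a·b ≤ x·y = x` and `x·(a·b) = (x·a)·(y·b) ≤ 0`, so `a·b ≤ x ⊓ ¬x = a`.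
-/

namespace CIdInRL
variable {α : Type*} [CIdInRL α]

theorem le_arrow_iff {x y z : α} : y ≤ arrow x z ↔ x * y ≤ z :=
  (residuation x y z).symm

instance : IsOrderedMonoid α where
  mul_le_mul_left a b hab c := by
    rw [mul_comm a, mul_comm b, ← le_arrow_iff]
    exact hab.trans (le_arrow_iff.2 le_rfl)

theorem le_neg_iff {x y : α} : y ≤ neg x ↔ x * y ≤ 0 :=
  le_arrow_iff

theorem neg_neg (x : α) : neg (neg x) = x :=
  involutive x

theorem le_iff_neg_mul_le_zero {x y : α} : y ≤ x ↔ neg x * y ≤ 0 := by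
  rw [← le_neg_iff, neg_neg]

theorem mul_neg_le_zero (x : α) : x * neg x ≤ 0 :=
  le_neg_iff.1 le_rfl

theorem mul_le_zero {a b : α} (ha : a ≤ 0) (hb : b ≤ 0) : a * b ≤ 0 :=
  (mul_le_mul' ha hb).trans_eq (idem 0)

theorem self_le_mul_of_le {a b : α} (h : a ≤ b) : a ≤ a * b :=
  (idem a).symm.trans_le (mul_le_mul_right h a)

theorem zx_le (x : α) : zx x ≤ x :=
  inf_le_left

theorem zx_le_neg (x : α) : zx x ≤ neg x :=
  inf_le_right

theorem mul_zx_le_zero (x : α) : x * zx x ≤ 0 :=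
  le_neg_iff.1 (zx_le_neg x)

theorem zx_le_mul_neg (x : α) : zx x ≤ x * neg x :=
  (idem (zx x)).symm.trans_le (mul_le_mul' (zx_le x) (zx_le_neg x))

theorem zx_le_zx_of_mleq {x y : α} (h : mleq x y) : zx x ≤ zx y := by
  have hx : x * y * neg x = x * neg x := by rw [h]
  have hy : zx x ≤ y := le_iff_neg_mul_le_zero.2 <| calc
    neg y * zx x ≤ neg y * (x * y * neg x) := hx ▸ mul_le_mul_right (zx_le_mul_neg x) _
    _ = y * neg y * (x * neg x) := by ac_rfl
    _ ≤ 0 := mul_le_zero (mul_neg_le_zero y) (mul_neg_le_zero x)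
  have hny : zx x ≤ neg y := le_neg_iff.2 <| calc
    y * zx x ≤ y * (x * neg x) := mul_le_mul_right (zx_le_mul_neg x) _
    _ = x * y * neg x := by ac_rfl
    _ ≤ 0 := hx ▸ mul_neg_le_zero x
  exact le_inf hy hny

theorem mul_zx_le_zx_of_mleq {x y : α} (h : mleq x y) : zx x * zx y ≤ zx x := by
  have hx : zx x * zx y ≤ x := (mul_le_mul' (zx_le x) (zx_le y)).trans_eq h
  have hnx : zx x * zx y ≤ neg x := by
    rw [le_neg_iff]
    calc x * (zx x * zx y) = x * y * (zx x * zx y) := by rw [h]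
      _ = x * zx x * (y * zx y) := mul_mul_mul_comm _ _ _ _
      _ ≤ 0 := mul_le_zero (mul_zx_le_zero x) (mul_zx_le_zero y)
  exact le_inf hx hnx

end CIdInRL

open CIdInRL in
theorem stmt9 {α : Type*} [CIdInRL α] (x y : α) (h : mleq x y) : mleq (zx x) (zx y) :=
  le_antisymm (mul_zx_le_zx_of_mleq h) (self_le_mul_of_le (zx_le_zx_of_mleq h))
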